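/- Let $j_1,\dots,j_{2m-1} \in \{1,\dots,m\}$ be such that exactly one index $j_{2m}$ occurs once and every other index occurs exactly twice. Then $\Delta_{j_1,\mathbf{h}_1} \cdots \Delta_{j_{2m-1},\mathbf{h}_{2m-1}} D(\overline{x})$, as a polynomial in $\overline{x}$, depends only on the block $\mathbf{x}_{j_{2m}}$ (for fixed $\mathbf{h}_1,\dots,\mathbf{h}_{2m-1}$), and it is an affine-linear function of $\mathbf{x}_{j_{2m}}$. -/

import Mathlib

open MvPolynomial

/-- The discrete differencing operator `Δ_{i,h}`. -/
noncomputable def deltaOp {s m : ℕ} (i : Fin m) (h : Fin s → ℤ)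
    (G : MvPolynomial (Fin m × Fin s) ℤ) : MvPolynomial (Fin m × Fin s) ℤ :=
  (MvPolynomial.aeval (fun v : Fin m × Fin s =>
      if v.1 = i then MvPolynomial.X v + MvPolynomial.C (h v.2) else MvPolynomial.X v)) G - G

/-- Iterated differencing along a list of (block index, shift) pairs. -/
noncomputable def iterDelta {s m : ℕ} :
    List (Fin m × (Fin s → ℤ)) → MvPolynomial (Fin m × Fin s) ℤ →
      MvPolynomial (Fin m × Fin s) ℤ
  | [], G => G
  | p :: L, G => deltaOp p.1 p.2 (iterDelta L G)

/-- The Gram determinant as a polynomial in `ms` variables. -/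
noncomputable def gramPoly (s m : ℕ) : MvPolynomial (Fin m × Fin s) ℤ :=
  Matrix.det (Matrix.of fun a b : Fin m =>
    ∑ n : Fin s, MvPolynomial.X (a, n) * MvPolynomial.X (b, n))

/-!
Give every variable of block `i` the weight `k i`. Each entry `⟨x_a, x_b⟩` of the Gram matrix
has weighted degree `k a + k b`, so `D` has weighted degree at most `2 ∑ k`. The difference
`Δ_{i,h} = φ - id`, with `φ` the translation of block `i`, lowers weighted degree by `k i`: it
does so on single variables, and the Leibniz rule `φ(pq) - pq = (φp - p) φq + p (φq - q)` carries
this over to all monomials. Weighting only a block `i ≠ j_{2m}`, which is differenced twice,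
leaves degree `2 - 2 = 0` in it; weighting all blocks by `1` leaves total degree
`2m - (2m - 1) = 1`.
-/
namespace MvPolynomial

open Finsupp

section WeightedDegreeLE

variable {σ R : Type*} [CommSemiring R]

variable (R) in
/-- The index is an integer so that `n - k` never truncates: for `n < 0` this is `⊥`. -/
noncomputable def weightedDegreeLE (w : σ → ℕ) (n : ℤ) : Submodule R (MvPolynomial σ R) :=
  restrictSupport R {d | (weight w d : ℤ) ≤ n}

variable {w : σ → ℕ} {n : ℤ} {p : MvPolynomial σ R}

theorem mem_weightedDegreeLE :
    p ∈ weightedDegreeLE R w n ↔ ∀ d ∈ p.support, (weight w d : ℤ) ≤ n :=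
  Iff.rfl

theorem weightedDegreeLE_mono : Monotone (weightedDegreeLE R w) :=
  fun _ _ hmn => restrictSupport_mono R fun _ hd => le_trans hd hmn

theorem monomial_mem_weightedDegreeLE {d : σ →₀ ℕ} (hd : (weight w d : ℤ) ≤ n) (c : R) :
    monomial d c ∈ weightedDegreeLE R w n :=
  (monomial_mem_restrictSupport R).2 (.inl hd)

theorem X_mem_weightedDegreeLE (v : σ) : (X v : MvPolynomial σ R) ∈ weightedDegreeLE R w (w v) :=
  monomial_mem_weightedDegreeLE (by simp [weight_single]) 1

instance : SetLike.GradedMonoid (weightedDegreeLE R w) where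
  one_mem := monomial_mem_weightedDegreeLE (by simp) 1
  mul_mem a b p q hp hq := by
    classical
    rw [mem_weightedDegreeLE] at *
    intro d hd
    obtain ⟨e, he, f, hf, rfl⟩ := Finset.mem_add.1 (support_mul p q hd)
    push_cast [map_add]
    exact add_le_add (hp e he) (hq f hf)

theorem weightedDegreeLE_le_of_X_mem (G : ℤ → Submodule R (MvPolynomial σ R))
    [SetLike.GradedMonoid G] (hG : Monotone G) (hX : ∀ v, X v ∈ G (w v)) (n : ℤ) :
    weightedDegreeLE R w n ≤ G n := by
  rw [weightedDegreeLE, restrictSupport_eq_span, Submodule.span_le]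
  rintro _ ⟨d, hd, rfl⟩
  classical
  refine hG hd ?_
  change monomial d (1 : R) ∈ G _
  rw [← prod_X_pow_eq_monomial]
  convert SetLike.prod_pow_mem_graded G (fun v => (w v : ℤ)) X d fun v _ => hX v using 2
  simp [weight_apply, Finsupp.sum]

theorem weight_eq_zero_of_mem_vars (hp : p ∈ weightedDegreeLE R w 0) {v : σ} (hv : v ∈ p.vars) :
    w v = 0 := by
  obtain ⟨d, hd, hvd⟩ := (mem_vars_iff_mem_support v).1 hv
  have := le_weight_of_ne_zero' w (Finsupp.mem_support_iff.1 hvd)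
  have := mem_weightedDegreeLE.1 hp d hd
  omega

theorem totalDegree_le_of_mem_weightedDegreeLE_one {n : ℕ} (hp : p ∈ weightedDegreeLE R 1 n) :
    p.totalDegree ≤ n := by
  rw [← weightedTotalDegree_one]
  exact Finset.sup_le fun d hd => by exact_mod_cast mem_weightedDegreeLE.1 hp d hd

end WeightedDegreeLE

variable {σ R : Type*} [CommRing R] {w : σ → ℕ}

theorem algHom_sub_self_mem_weightedDegreeLE (φ : MvPolynomial σ R →ₐ[R] MvPolynomial σ R)
    (k : ℕ) (hφ : ∀ v, φ (X v) - X v ∈ weightedDegreeLE R w (w v - k)) {n : ℤ}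
    {p : MvPolynomial σ R} (hp : p ∈ weightedDegreeLE R w n) :
    φ p - p ∈ weightedDegreeLE R w (n - k) := by
  let G (n : ℤ) : Submodule R (MvPolynomial σ R) := weightedDegreeLE R w n ⊓
    (weightedDegreeLE R w (n - k)).comap (φ.toLinearMap - LinearMap.id)
  have hG : Monotone G := fun a b hab =>
    inf_le_inf (weightedDegreeLE_mono hab) (Submodule.comap_mono (weightedDegreeLE_mono (by omega)))
  have : SetLike.GradedMonoid G := {
    one_mem := ⟨SetLike.GradedOne.one_mem, by simp⟩
    mul_mem := by
      rintro a b p q ⟨hp, hφp⟩ ⟨hq, hφq⟩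
      refine ⟨SetLike.mul_mem_graded hp hq, ?_⟩
      simp only [SetLike.mem_coe, Submodule.mem_comap, LinearMap.sub_apply,
        AlgHom.toLinearMap_apply, LinearMap.id_apply] at hφp hφq ⊢
      have hφq' : φ q ∈ weightedDegreeLE R w b := by
        simpa using add_mem hq (weightedDegreeLE_mono (by omega) hφq)
      have key : φ (p * q) - p * q = (φ p - p) * φ q + p * (φ q - q) := by rw [map_mul]; ring
      rw [key]
      exact add_mem (weightedDegreeLE_mono (by omega) (SetLike.mul_mem_graded hφp hφq'))
        (weightedDegreeLE_mono (by omega) (SetLike.mul_mem_graded hp hφq)) }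
  have hX (v : σ) : X v ∈ G (w v) := ⟨X_mem_weightedDegreeLE v, hφ v⟩
  simpa using (weightedDegreeLE_le_of_X_mem G hG hX n hp).2

end MvPolynomial

section Blocks

variable {s m : ℕ} (k : Fin m → ℕ)

theorem deltaOp_mem_weightedDegreeLE (i : Fin m) (h : Fin s → ℤ) {n : ℤ}
    {p : MvPolynomial (Fin m × Fin s) ℤ} (hp : p ∈ weightedDegreeLE ℤ (k ∘ Prod.fst) n) :
    deltaOp i h p ∈ weightedDegreeLE ℤ (k ∘ Prod.fst) (n - k i) := by
  refine algHom_sub_self_mem_weightedDegreeLE _ (k i) (fun v => ?_) hp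
  rw [aeval_X]
  split_ifs with hv
  · rw [add_sub_cancel_left, Function.comp_apply, hv, sub_self]
    exact monomial_mem_weightedDegreeLE (by simp) _
  · rw [sub_self]
    exact zero_mem _

theorem iterDelta_mem_weightedDegreeLE (L : List (Fin m × (Fin s → ℤ))) {n : ℤ}
    {G : MvPolynomial (Fin m × Fin s) ℤ} (hG : G ∈ weightedDegreeLE ℤ (k ∘ Prod.fst) n) :
    iterDelta L G ∈ weightedDegreeLE ℤ (k ∘ Prod.fst) (n - (L.map fun p => k p.1).sum) := by
  induction L with
  | nil => simpa [iterDelta] using hG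
  | cons p L ih =>
    rw [iterDelta]
    convert deltaOp_mem_weightedDegreeLE k p.1 p.2 ih using 2
    push_cast [List.map_cons, List.sum_cons]
    ring

theorem gramPoly_mem_weightedDegreeLE :
    gramPoly s m ∈ weightedDegreeLE ℤ (k ∘ Prod.fst) (2 * ∑ i, k i) := by
  have hentry (a b : Fin m) : ∑ n : Fin s, X (a, n) * X (b, n) ∈
      weightedDegreeLE ℤ (k ∘ Prod.fst) (k a + k b) :=
    Submodule.sum_mem _ fun n _ =>
      SetLike.mul_mem_graded (X_mem_weightedDegreeLE (a, n)) (X_mem_weightedDegreeLE (b, n))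
  rw [gramPoly, Matrix.det_apply]
  simp only [Matrix.of_apply]
  refine Submodule.sum_mem _ fun σ _ => Submodule.smul_of_tower_mem _ _ ?_
  convert SetLike.prod_mem_graded _ _ _ fun a _ => hentry (σ a) a using 2
  rw [Finset.sum_add_distrib, Equiv.sum_comp σ (fun i => (k i : ℤ))]
  push_cast
  ring

end Blocks

theorem iterDelta_gram_affine_general (s m : ℕ)
    (j : Fin (2 * m - 1) → Fin m) (h : Fin (2 * m - 1) → Fin s → ℤ)
    (j2m : Fin m)
    (h2 : ∀ i : Fin m, i ≠ j2m → (Finset.univ.filter fun k => j k = i).card = 2) :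
    (∀ v ∈ (iterDelta (List.ofFn fun k => (j k, h k)) (gramPoly s m)).vars, v.1 = j2m) ∧
    (iterDelta (List.ofFn fun k => (j k, h k)) (gramPoly s m)).totalDegree ≤ 1 := by
  set P := iterDelta (List.ofFn fun k => (j k, h k)) (gramPoly s m)
  have hP (k : Fin m → ℕ) :
      P ∈ weightedDegreeLE ℤ (k ∘ Prod.fst) (2 * ∑ i, k i - ∑ t, k (j t)) := by
    have := iterDelta_mem_weightedDegreeLE k (List.ofFn fun k => (j k, h k))
      (gramPoly_mem_weightedDegreeLE k)
    rwa [List.map_ofFn, List.sum_ofFn] at this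
  constructor
  · intro v hv
    by_contra hne
    have hblock : P ∈ weightedDegreeLE ℤ ((fun i => if i = v.1 then 1 else 0) ∘ Prod.fst) 0 := by
      convert hP (fun i => if i = v.1 then 1 else 0) using 2
      rw [Finset.sum_ite_eq', Finset.sum_boole, h2 _ hne]
      simp
    simpa using weight_eq_zero_of_mem_vars hblock hv
  · have hall := hP fun _ => 1
    simp only [Finset.sum_const, Finset.card_univ, Fintype.card_fin, smul_eq_mul, mul_one] at hall
    exact totalDegree_le_of_mem_weightedDegreeLE_one (weightedDegreeLE_mono (by omega) hall)

/-- If among the indices `j₁,…,j_{2m-1}` the index `j2m` occurs exactly once and every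
other index occurs exactly twice, then the iterated difference
`Δ_{j₁,h₁} ⋯ Δ_{j_{2m-1},h_{2m-1}} D` involves only the variables of block `j2m`
and is an affine-linear polynomial (total degree at most 1) in them. -/
theorem iterDelta_gram_affine (s m : ℕ) (hm : 1 ≤ m)
    (j : Fin (2 * m - 1) → Fin m) (h : Fin (2 * m - 1) → Fin s → ℤ)
    (j2m : Fin m)
    (h1 : (Finset.univ.filter fun k => j k = j2m).card = 1)
    (h2 : ∀ i : Fin m, i ≠ j2m → (Finset.univ.filter fun k => j k = i).card = 2) :
    (∀ v ∈ (iterDelta (List.ofFn fun k => (j k, h k)) (gramPoly s m)).vars, v.1 = j2m) ∧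
    (iterDelta (List.ofFn fun k => (j k, h k)) (gramPoly s m)).totalDegree ≤ 1 :=
  iterDelta_gram_affine_general s m j h j2m h2
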